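/- arXiv:1212.1908 — 4 statements merged into one kernel-verified Lean document; each statement's English description precedes it below -/
import Mathlib

section
/- For 1 ≤ r ≤ ⌊ℓ/2⌋, the subspace m_r spanned by { e_{r,s} : r+1 ≤ s ≤ ℓ-r }, { e_{q,ℓ-r+1} : r+1 ≤ q ≤ ℓ-r }, and e_{r,ℓ-r+1} is a Lie subalgebra of the strictly upper triangular matrices, isomorphic to the Heisenberg Lie algebra of dimension 2(ℓ-2r)+1, with center spanned by e_{r,ℓ-r+1}. -/
/-!
Write `a = r-1` and `c = ℓ-r` for the (0-based) top row and right column and `m k = r+k` for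
the middle indices. Then `m_r` is the space of matrices supported on the positions
`(a, m k)`, `(m k, c)`, `(a, c)`. Since `a, c` and the `m k` are pairwise distinct, the only
composable pairs of such positions are `(a, m k), (m k, c)`, which compose to `(a, c)`; so the
support is closed under composition (hence `m_r` is a subalgebra), and the matrix units
`X k = e_{a, m k}`, `Y k = e_{m k, c}`, `Z = e_{a, c}` satisfy exactly the Heisenberg relations.
A central element has vanishing `(a, m k)`-entry because it commutes with `Y k`, and vanishing
`(m k, c)`-entry because it commutes with `X k`.
-/

noncomputable def E (ℓ : ℕ) (i j : Fin ℓ) : Matrix (Fin ℓ) (Fin ℓ) ℝ :=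
  Matrix.single i j 1

/-- The positions (written with `1`-based indices `i j`) of the matrix units spanning
`m_r`: the positions `(r,s)` with `r+1 ≤ s ≤ ℓ-r`, the positions `(q, ℓ-r+1)` with
`r+1 ≤ q ≤ ℓ-r`, and the position `(r, ℓ-r+1)`. -/
def MPos (ℓ r i j : ℕ) : Prop :=
  (i = r ∧ r + 1 ≤ j ∧ j ≤ ℓ - r) ∨ (j = ℓ - r + 1 ∧ r + 1 ≤ i ∧ i ≤ ℓ - r) ∨
    (i = r ∧ j = ℓ - r + 1)

/-- Membership in `m_r`: supported on the positions `MPos`. -/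
def InMr (ℓ r : ℕ) (A : Matrix (Fin ℓ) (Fin ℓ) ℝ) : Prop :=
  ∀ i j : Fin ℓ, ¬ MPos ℓ r ((i : ℕ) + 1) ((j : ℕ) + 1) → A i j = 0

open Set Function Matrix

namespace Matrix

variable {n κ R : Type*}

def SupportedOn [Zero R] (s : Set (n × n)) (A : Matrix n n R) : Prop :=
  ∀ i j, (i, j) ∉ s → A i j = 0

variable {s : Set (n × n)}

theorem SupportedOn.sub [AddGroup R] {A B : Matrix n n R} (hA : SupportedOn s A)
    (hB : SupportedOn s B) : SupportedOn s (A - B) := fun i j hij => by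
  rw [sub_apply, hA i j hij, hB i j hij, sub_zero]

theorem SupportedOn.mul [Fintype n] [NonUnitalNonAssocSemiring R]
    (hs : ∀ {i k j}, (i, k) ∈ s → (k, j) ∈ s → (i, j) ∈ s) {A B : Matrix n n R}
    (hA : SupportedOn s A) (hB : SupportedOn s B) : SupportedOn s (A * B) := fun i j hij => by
  rw [mul_apply]
  refine Finset.sum_eq_zero fun k _ => ?_
  by_cases hik : (i, k) ∈ s
  · rw [hB k j fun hkj => hij (hs hik hkj), mul_zero]
  · rw [hA i k hik, zero_mul]

theorem supportedOn_single [DecidableEq n] [Zero R] {i j : n} (h : (i, j) ∈ s) (x : R) :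
    SupportedOn s (single i j x) := by
  rintro i' j' hij'
  exact single_apply_of_ne _ _ _ _ _ fun ⟨hi, hj⟩ => hij' (hi ▸ hj ▸ h)

theorem mem_span_single_of_supportedOn [Fintype n] [DecidableEq n] [Semiring R]
    (pos : κ → n × n) {A : Matrix n n R} (hA : SupportedOn (range pos) A) :
    A ∈ Submodule.span R (range fun x => single (pos x).1 (pos x).2 (1 : R)) := by
  rw [matrix_eq_sum_single A]
  refine Submodule.sum_mem _ fun i _ => Submodule.sum_mem _ fun j _ => ?_
  by_cases hij : (i, j) ∈ range pos
  · obtain ⟨x, hx⟩ := hij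
    rw [← mul_one (A i j), ← smul_eq_mul, ← smul_single]
    exact Submodule.smul_mem _ _ (Submodule.subset_span ⟨x, by simp only [hx]⟩)
  · rw [hA i j hij, single_zero]
    exact Submodule.zero_mem _

theorem linearIndependent_single_comp [Fintype n] [DecidableEq n] [Semiring R]
    {pos : κ → n × n} (hpos : Injective pos) :
    LinearIndependent R fun x => single (pos x).1 (pos x).2 (1 : R) := by
  convert (stdBasis R n n).linearIndependent.comp pos hpos with x
  exact (stdBasis_eq_single R _ _).symm

theorem single_one_commutator [Fintype n] [DecidableEq n] [Ring R] (i j k l : n) :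
    single i j (1 : R) * single k l 1 - single k l 1 * single i j 1 =
      (if j = k then single i l 1 else 0) - if l = i then single k j 1 else 0 := by
  congr 1 <;> split_ifs with h <;>
    first | (subst h; simp) | exact single_mul_single_of_ne _ _ _ _ h _

end Matrix

section Heisenberg

variable {n ι R : Type*}

def heisPos (a c : n) (m : ι → n) : ι ⊕ ι ⊕ Unit → n × n :=
  Sum.elim (fun k => (a, m k)) (Sum.elim (fun k => (m k, c)) fun _ => (a, c))

def heisFamily [DecidableEq n] [Semiring R] (a c : n) (m : ι → n) :
    ι ⊕ ι ⊕ Unit → Matrix n n R :=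
  Sum.elim (fun k => single a (m k) 1) (Sum.elim (fun k => single (m k) c 1) fun _ => single a c 1)

variable {a c : n} {m : ι → n}

theorem heisFamily_eq [DecidableEq n] [Semiring R] :
    heisFamily (R := R) a c m = fun x => single (heisPos a c m x).1 (heisPos a c m x).2 1 := by
  funext x
  rcases x with _ | _ | _ <;> rfl

theorem mem_range_heisPos {i j : n} :
    (i, j) ∈ range (heisPos a c m) ↔
      (i = a ∧ j ∈ range m) ∨ (i ∈ range m ∧ j = c) ∨ (i = a ∧ j = c) := by
  simp only [mem_range, Sum.exists, heisPos, Sum.elim_inl, Sum.elim_inr, Prod.mk.injEq,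
    exists_const]
  aesop

theorem heisPos_injective (hm : Injective m) (ha : a ∉ range m) (hc : c ∉ range m) :
    Injective (heisPos a c m) := by
  rintro (k | k | ⟨⟩) (k' | k' | ⟨⟩) h <;> simp_all [heisPos, hm.eq_iff]

theorem fst_ne_of_mem_range_heisPos (hc : c ∉ range m) (hac : a ≠ c) {i j : n}
    (h : (i, j) ∈ range (heisPos a c m)) : i ≠ c := by
  rw [mem_range_heisPos] at h
  aesop

theorem snd_ne_of_mem_range_heisPos (ha : a ∉ range m) (hac : a ≠ c) {i j : n}
    (h : (i, j) ∈ range (heisPos a c m)) : j ≠ a := by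
  rw [mem_range_heisPos] at h
  aesop

theorem heisPos_trans (ha : a ∉ range m) (hc : c ∉ range m) (hac : a ≠ c) {i k j : n}
    (hik : (i, k) ∈ range (heisPos a c m)) (hkj : (k, j) ∈ range (heisPos a c m)) :
    (i, j) ∈ range (heisPos a c m) := by
  rw [mem_range_heisPos] at hik hkj ⊢
  aesop

theorem supportedOn_single_heisPos [DecidableEq n] [Zero R] (x : ι ⊕ ι ⊕ Unit) (t : R) :
    SupportedOn (range (heisPos a c m)) (single (heisPos a c m x).1 (heisPos a c m x).2 t) :=
  supportedOn_single (mem_range_self (f := heisPos a c m) x) t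

variable [Fintype n] [DecidableEq n]

theorem linearIndependent_heisFamily [Semiring R] (hm : Injective m) (ha : a ∉ range m)
    (hc : c ∉ range m) : LinearIndependent R (heisFamily (R := R) a c m) := by
  rw [heisFamily_eq]
  exact linearIndependent_single_comp (heisPos_injective hm ha hc)

theorem mem_span_heisFamily [Semiring R] {A : Matrix n n R}
    (hA : SupportedOn (range (heisPos a c m)) A) :
    A ∈ Submodule.span R (range (heisFamily a c m)) := by
  rw [heisFamily_eq]
  exact mem_span_single_of_supportedOn _ hA

theorem single_mul_eq_zero_of_supportedOn_heisPos [Semiring R] (hc : c ∉ range m) (hac : a ≠ c)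
    {B : Matrix n n R} (hB : SupportedOn (range (heisPos a c m)) B) (x : R) :
    single a c x * B = 0 := by
  ext i j
  rw [Matrix.zero_apply]
  by_cases hi : i = a
  · rw [hi, single_mul_apply_same, hB c j fun h => fst_ne_of_mem_range_heisPos hc hac h rfl,
      mul_zero]
  · exact single_mul_apply_of_ne _ _ _ _ _ hi B

theorem mul_single_eq_zero_of_supportedOn_heisPos [Semiring R] (ha : a ∉ range m) (hac : a ≠ c)
    {B : Matrix n n R} (hB : SupportedOn (range (heisPos a c m)) B) (x : R) :
    B * single a c x = 0 := by
  ext i j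
  rw [Matrix.zero_apply]
  by_cases hj : j = c
  · rw [hj, mul_single_apply_same, hB i a fun h => snd_ne_of_mem_range_heisPos ha hac h rfl,
      zero_mul]
  · exact mul_single_apply_of_ne _ _ _ _ _ hj B

theorem commute_supportedOn_heisPos_iff [CommRing R] (ha : a ∉ range m) (hc : c ∉ range m)
    (hac : a ≠ c) {A : Matrix n n R} (hA : SupportedOn (range (heisPos a c m)) A) :
    (∀ B, SupportedOn (range (heisPos a c m)) B → A * B - B * A = 0) ↔
      ∃ t : R, A = t • single a c 1 := by
  constructor
  · intro hcomm
    have hX (k : ι) : Commute (single a (m k) (1 : R)) A :=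
      (sub_eq_zero.1 (hcomm _ (supportedOn_single_heisPos (.inl k) 1))).symm
    have hY (k : ι) : Commute (single (m k) c (1 : R)) A :=
      (sub_eq_zero.1 (hcomm _ (supportedOn_single_heisPos (.inr (.inl k)) 1))).symm
    refine ⟨A a c, ext fun i j => ?_⟩
    by_cases hij : (i, j) ∈ range (heisPos a c m)
    · obtain ⟨x | x | ⟨⟩, hx⟩ := hij <;>
        simp only [heisPos, Sum.elim_inl, Sum.elim_inr, Prod.mk.injEq] at hx <;>
        obtain ⟨rfl, rfl⟩ := hx
      · rw [col_eq_zero_of_commute_single (hY x) fun h => ha ⟨x, h.symm⟩]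
        simp [single_apply_of_col_ne _ _ fun h => hc ⟨x, h.symm⟩]
      · rw [row_eq_zero_of_commute_single (hX x) fun h => hc ⟨x, h.symm⟩]
        simp [single_apply_of_row_ne (fun h => ha ⟨x, h.symm⟩)]
      · simp
    · have hne : ¬(a = i ∧ c = j) := fun ⟨hi, hj⟩ =>
        hij (hi ▸ hj ▸ mem_range_self (f := heisPos a c m) (.inr (.inr ())))
      rw [hA i j hij, Matrix.smul_apply, single_apply_of_ne _ _ _ _ _ hne, smul_zero]
  · rintro ⟨t, rfl⟩ B hB
    rw [smul_mul, Matrix.mul_smul, single_mul_eq_zero_of_supportedOn_heisPos hc hac hB,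
      mul_single_eq_zero_of_supportedOn_heisPos ha hac hB, sub_self]

end Heisenberg

def midIdx (ℓ r : ℕ) (k : Fin (ℓ - 2 * r)) : Fin ℓ := ⟨r + k, by omega⟩

theorem mem_range_midIdx {ℓ r : ℕ} {j : Fin ℓ} :
    j ∈ range (midIdx ℓ r) ↔ r ≤ j ∧ j < ℓ - r := by
  constructor
  · rintro ⟨k, rfl⟩
    simp only [midIdx]
    omega
  · intro h
    exact ⟨⟨j - r, by omega⟩, Fin.ext (by simp only [midIdx]; omega)⟩

theorem inMr_eq_supportedOn {ℓ r : ℕ} (hr1 : 1 ≤ r) (hr2 : 2 * r ≤ ℓ) {a c : Fin ℓ}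
    (ha : (a : ℕ) = r - 1) (hc : (c : ℕ) = ℓ - r) :
    InMr ℓ r = SupportedOn (range (heisPos a c (midIdx ℓ r))) := by
  suffices h : ∀ i j : Fin ℓ,
      MPos ℓ r (i + 1) (j + 1) ↔ (i, j) ∈ range (heisPos a c (midIdx ℓ r)) by
    funext A
    simp only [InMr, SupportedOn, h]
  intro i j
  simp only [MPos, mem_range_heisPos, mem_range_midIdx, Fin.ext_iff]
  omega

/-- For `1 ≤ r ≤ ⌊ℓ/2⌋`, the subspace `m_r` is a Lie subalgebra of the strictly upper
triangular matrices, isomorphic to the Heisenberg Lie algebra of dimension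
`2(ℓ-2r)+1` (it has a basis `X_1, …, X_d, Y_1, …, Y_d, Z` with `d = ℓ-2r` whose only
nonzero brackets are `[X_i, Y_i] = Z`), with center spanned by `Z = e_{r, ℓ-r+1}`. -/
theorem stmt2 (ℓ r : ℕ) (hr1 : 1 ≤ r) (hr2 : 2 * r ≤ ℓ) :
    -- m_r is closed under the bracket [A,B] = AB - BA
    (∀ A B : Matrix (Fin ℓ) (Fin ℓ) ℝ, InMr ℓ r A → InMr ℓ r B →
      InMr ℓ r (A * B - B * A)) ∧
    -- Heisenberg structure of dimension 2(ℓ-2r)+1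
    ∃ (X Y : Fin (ℓ - 2 * r) → Matrix (Fin ℓ) (Fin ℓ) ℝ)
      (Z : Matrix (Fin ℓ) (Fin ℓ) ℝ),
      Z = E ℓ ⟨r - 1, by omega⟩ ⟨ℓ - r, by omega⟩ ∧
      (∀ i, InMr ℓ r (X i)) ∧ (∀ i, InMr ℓ r (Y i)) ∧ InMr ℓ r Z ∧
      LinearIndependent ℝ
        (Sum.elim X (Sum.elim Y (fun _ : Unit => Z))) ∧
      (∀ A : Matrix (Fin ℓ) (Fin ℓ) ℝ, InMr ℓ r A →
        A ∈ Submodule.span ℝ (Set.range (Sum.elim X (Sum.elim Y (fun _ : Unit => Z))))) ∧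
      (∀ i j, X i * Y j - Y j * X i = if i = j then Z else 0) ∧
      (∀ i j, X i * X j - X j * X i = 0) ∧
      (∀ i j, Y i * Y j - Y j * Y i = 0) ∧
      (∀ i, X i * Z - Z * X i = 0) ∧
      (∀ i, Y i * Z - Z * Y i = 0) ∧
      -- the center of m_r is spanned by Z = e_{r, ℓ-r+1}
      (∀ A, InMr ℓ r A →
        ((∀ B, InMr ℓ r B → A * B - B * A = 0) ↔ ∃ c : ℝ, A = c • Z)) := by
  set a : Fin ℓ := ⟨r - 1, by omega⟩
  set c : Fin ℓ := ⟨ℓ - r, by omega⟩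
  rw [inMr_eq_supportedOn hr1 hr2 (a := a) (c := c) rfl rfl]
  set m := midIdx ℓ r
  have hm : Injective m := fun k k' h => by simpa [m, midIdx, Fin.ext_iff] using h
  have ha : a ∉ range m := by simp only [m, a, mem_range_midIdx]; omega
  have hc : c ∉ range m := by simp only [m, c, mem_range_midIdx]; omega
  have hac : a ≠ c := by simp only [a, c, ne_eq, Fin.ext_iff]; omega
  have hma (k) : m k ≠ a := fun h => ha ⟨k, h⟩
  have hcm (k) : c ≠ m k := fun h => hc ⟨k, h.symm⟩
  refine ⟨fun A B hA hB =>
      (hA.mul (heisPos_trans ha hc hac) hB).sub (hB.mul (heisPos_trans ha hc hac) hA),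
    fun k => single a (m k) 1, fun k => single (m k) c 1, single a c 1, rfl,
    fun k => supportedOn_single_heisPos (.inl k) 1,
    fun k => supportedOn_single_heisPos (.inr (.inl k)) 1,
    supportedOn_single_heisPos (.inr (.inr ())) 1,
    linearIndependent_heisFamily hm ha hc, fun A hA => mem_span_heisFamily hA,
    ?_, ?_, ?_, ?_, ?_, fun A hA => commute_supportedOn_heisPos_iff ha hc hac hA⟩ <;>
  intros <;> rw [single_one_commutator] <;> simp [hm.eq_iff, hma, hcm, hac.symm]
end

section
/- Let ρ denote reflection over the antidiagonal on indices, ρ(e_{i,j}) = e_{ℓ+1-j, ℓ+1-i}. If e_{i,j} ∈ m_r and e_{a,b} ∈ m_t with r ≠ t, then the product [e_{i,j}, e_{a,b}] has no component on the antidiagonal, i.e., [m_r, m_t] lies in the span of the matrix units e_{u,v} with u + v ≠ ℓ + 1. -/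
/-- If `A ∈ m_r` and `B ∈ m_t` with `r ≠ t`, then `[A,B] = AB - BA` has no component
on the antidiagonal: all its entries at positions `(u,v)` with `u + v = ℓ + 1`
(written with `1`-based indices) vanish, i.e. `[m_r, m_t]` lies in the span of the
matrix units `e_{u,v}` with `u + v ≠ ℓ + 1`. -/
theorem stmt4 (ℓ r t : ℕ) (hr1 : 1 ≤ r) (hr2 : 2 * r ≤ ℓ) (ht1 : 1 ≤ t)
    (ht2 : 2 * t ≤ ℓ) (hrt : r ≠ t)
    (A B : Matrix (Fin ℓ) (Fin ℓ) ℝ) (hA : InMr ℓ r A) (hB : InMr ℓ t B) :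
    ∀ u v : Fin ℓ, ((u : ℕ) + 1) + ((v : ℕ) + 1) = ℓ + 1 →
      (A * B - B * A) u v = 0 := by
  have key : ∀ r' t' i m j : ℕ, 2 * r' ≤ ℓ → 2 * t' ≤ ℓ → r' ≠ t' →
      MPos ℓ r' i m → MPos ℓ t' m j → i + j = ℓ + 1 → False := by
    intro r' t' i m j h1 h2 h3 h4 h5 h6
    unfold MPos at h4 h5
    omega
  intro u v huv
  rw [Matrix.sub_apply, Matrix.mul_apply, Matrix.mul_apply]
  have h1 : ∀ k : Fin ℓ, A u k * B k v = 0 := by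
    intro k
    by_cases hA' : MPos ℓ r ((u : ℕ) + 1) ((k : ℕ) + 1)
    · by_cases hB' : MPos ℓ t ((k : ℕ) + 1) ((v : ℕ) + 1)
      · exact absurd (key r t _ _ _ hr2 ht2 hrt hA' hB' huv) (by simp)
      · rw [hB k v hB', mul_zero]
    · rw [hA u k hA', zero_mul]
  have h2 : ∀ k : Fin ℓ, B u k * A k v = 0 := by
    intro k
    by_cases hB' : MPos ℓ t ((u : ℕ) + 1) ((k : ℕ) + 1)
    · by_cases hA' : MPos ℓ r ((k : ℕ) + 1) ((v : ℕ) + 1)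
      · exact absurd (key t r _ _ _ ht2 hr2 hrt.symm hB' hA' huv) (by simp)
      · rw [hA k v hA', mul_zero]
    · rw [hB u k hB', zero_mul]
  rw [Finset.sum_eq_zero fun k _ => h1 k, Finset.sum_eq_zero fun k _ => h2 k, sub_zero]
end

section
/- If α ∈ Δ+_r ∪ {β_r} and γ ∈ Δ+_s ∪ {β_s} with t = min(r,s), and α + γ is a root, then α + γ ∈ Δ+_t ∪ {β_t}. Hence the subspaces m_r = g_{β_r} + Σ_{α ∈ Δ+_r} g_α satisfy [m_r, m_s] ⊆ m_{min(r,s)} and each n_r = m_1 + ... + m_r is an ideal in the nilpotent algebra n = Σ_{α ∈ Δ+} g_α. -/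
open scoped RealInnerProductSpace

/-!
A root lies in `Δ⁺_r ∪ {β_r}` exactly when `r` is the first index at which it pairs nontrivially
with the cascade, and that pairing is positive. Both conditions are preserved under addition with
`r` replaced by the minimum: below the minimum both summands are orthogonal to the cascade, and at
the minimum either both pairings are positive or one of them still vanishes. The Lie-theoretic
statements then follow from the bracket rule `[g_α, g_γ] ⊆ g_{α+γ}`, together with `g_μ = 0` when
`μ` is not a root.
-/

section LieBracket

variable {R L : Type*} [CommRing R] [LieRing L] [LieAlgebra R L]

theorem lie_mem_of_mem_iSup_left {ι : Sort*} (p : ι → Submodule R L) (N : Submodule R L)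
    {x y : L} (h : ∀ i, ∀ x ∈ p i, ⁅x, y⁆ ∈ N) (hx : x ∈ iSup p) : ⁅x, y⁆ ∈ N :=
  Submodule.iSup_induction p (motive := fun x => ⁅x, y⁆ ∈ N) hx h (by simp)
    fun a b ha hb => by rw [add_lie]; exact N.add_mem ha hb

theorem lie_mem_of_mem_iSup_right {κ : Sort*} (q : κ → Submodule R L) (N : Submodule R L)
    {x y : L} (h : ∀ j, ∀ y ∈ q j, ⁅x, y⁆ ∈ N) (hy : y ∈ iSup q) : ⁅x, y⁆ ∈ N :=
  Submodule.iSup_induction q (motive := fun y => ⁅x, y⁆ ∈ N) hy h (by simp)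
    fun a b ha hb => by rw [lie_add]; exact N.add_mem ha hb

theorem lie_mem_of_mem_biSup_of_add_mem {V : Type*} [AddCommMonoid V]
    {Δ S T : Set V} {g : V → Submodule R L} (N : Submodule R L)
    (hbr : ∀ α γ : V, ∀ x ∈ g α, ∀ y ∈ g γ, ⁅x, y⁆ ∈ g (α + γ))
    (hzero : ∀ μ : V, μ ∉ Δ → g μ = ⊥)
    (hST : ∀ α ∈ S, ∀ γ ∈ T, α + γ ∈ Δ → g (α + γ) ≤ N)
    {x y : L} (hx : x ∈ ⨆ α ∈ S, g α) (hy : y ∈ ⨆ γ ∈ T, g γ) : ⁅x, y⁆ ∈ N := by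
  refine lie_mem_of_mem_iSup_left _ N (fun α x hx => ?_) hx
  refine lie_mem_of_mem_iSup_left _ N (fun hα x hx => ?_) hx
  refine lie_mem_of_mem_iSup_right _ N (fun γ y hy => ?_) hy
  refine lie_mem_of_mem_iSup_right _ N (fun hγ y hy => ?_) hy
  have hxy := hbr α γ x hx y hy
  by_cases hroot : α + γ ∈ Δ
  · exact hST α hα γ hγ hroot hxy
  · rw [hzero _ hroot, Submodule.mem_bot] at hxy
    rw [hxy]
    exact N.zero_mem

end LieBracket

section CascadeLayer

variable {V : Type*} [NormedAddCommGroup V] [InnerProductSpace ℝ V]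

def cascadeLayer (β : ℕ → V) (r : ℕ) : Set V :=
  {α | (∀ i < r, ⟪α, β i⟫ = 0) ∧ 0 < ⟪α, β r⟫}

theorem add_mem_cascadeLayer_of_le {β : ℕ → V} {r s : ℕ} {α γ : V} (hrs : r ≤ s)
    (hα : α ∈ cascadeLayer β r) (hγ : γ ∈ cascadeLayer β s) : α + γ ∈ cascadeLayer β r := by
  obtain ⟨hαperp, hαpos⟩ := hα
  obtain ⟨hγperp, hγpos⟩ := hγ
  refine ⟨fun i hi => ?_, ?_⟩
  · rw [inner_add_left, hαperp i hi, hγperp i (hi.trans_le hrs), add_zero]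
  · rw [inner_add_left]
    rcases hrs.eq_or_lt with rfl | hlt
    · exact add_pos hαpos hγpos
    · rw [hγperp r hlt, add_zero]
      exact hαpos

theorem add_mem_cascadeLayer_min {β : ℕ → V} {r s : ℕ} {α γ : V}
    (hα : α ∈ cascadeLayer β r) (hγ : γ ∈ cascadeLayer β s) :
    α + γ ∈ cascadeLayer β (min r s) := by
  rcases le_total r s with hrs | hsr
  · rw [min_eq_left hrs]
    exact add_mem_cascadeLayer_of_le hrs hα hγ
  · rw [min_eq_right hsr, add_comm]
    exact add_mem_cascadeLayer_of_le hsr hγ hα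

end CascadeLayer

theorem stmt10_general {V L : Type*} [NormedAddCommGroup V] [InnerProductSpace ℝ V]
    [LieRing L] [LieAlgebra ℝ L]
    (Δ pos : Set V) (m : ℕ) (β : ℕ → V) (Layer : ℕ → Set V)
    (g : V → Submodule ℝ L)
    -- sum of two positive roots, when a root, is positive
    (hsum : ∀ α ∈ pos, ∀ γ ∈ pos, α + γ ∈ Δ → α + γ ∈ pos)
    -- layer characterization: α ∈ Δ⁺_r ∪ {β_r} iff α ⊥ β_i (i<r) and ⟨α, β_r⟩ > 0
    (hchar : ∀ r < m, Layer r ∪ {β r} =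
      {α ∈ pos | (∀ i < r, ⟪α, β i⟫ = 0) ∧ 0 < ⟪α, β r⟫})
    -- the layers together with the cascade roots exhaust Δ⁺
    (hcover : pos = ⋃ r ∈ Set.Iio m, (Layer r ∪ {β r}))
    -- root space bracket rule and vanishing of non-root spaces
    (hbr : ∀ α γ : V, ∀ x ∈ g α, ∀ y ∈ g γ, ⁅x, y⁆ ∈ g (α + γ))
    (hzero : ∀ μ : V, μ ∉ Δ → g μ = ⊥) :
    -- the root-theoretic statement
    (∀ r < m, ∀ s < m, ∀ α ∈ Layer r ∪ {β r}, ∀ γ ∈ Layer s ∪ {β s},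
      α + γ ∈ Δ → α + γ ∈ Layer (min r s) ∪ {β (min r s)}) ∧
    -- [m_r, m_s] ⊆ m_{min(r,s)}
    (∀ r < m, ∀ s < m,
      ∀ x ∈ (⨆ α ∈ Layer r ∪ {β r}, g α),
      ∀ y ∈ (⨆ α ∈ Layer s ∪ {β s}, g α),
        ⁅x, y⁆ ∈ (⨆ α ∈ Layer (min r s) ∪ {β (min r s)}, g α)) ∧
    -- each n_r is an ideal in n
    (∀ r < m,
      ∀ x ∈ (⨆ α ∈ pos, g α),
      ∀ y ∈ (⨆ i ∈ Set.Iic r, ⨆ α ∈ Layer i ∪ {β i}, g α),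
        ⁅x, y⁆ ∈ (⨆ i ∈ Set.Iic r, ⨆ α ∈ Layer i ∪ {β i}, g α)) := by
  have hlayer : ∀ r < m, ∀ s < m, ∀ α ∈ Layer r ∪ {β r}, ∀ γ ∈ Layer s ∪ {β s},
      α + γ ∈ Δ → α + γ ∈ Layer (min r s) ∪ {β (min r s)} := by
    intro r hr s hs α hα γ hγ hroot
    rw [hchar r hr] at hα
    rw [hchar s hs] at hγ
    rw [hchar _ (min_lt_of_left_lt hr)]
    exact ⟨hsum _ hα.1 _ hγ.1 hroot, add_mem_cascadeLayer_min hα.2 hγ.2⟩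
  refine ⟨hlayer, fun r hr s hs x hx y hy => ?_, fun r hr x hx y hy => ?_⟩
  · refine lie_mem_of_mem_biSup_of_add_mem _ hbr hzero (fun α hα γ hγ hroot => ?_) hx hy
    exact le_biSup g (hlayer r hr s hs α hα γ hγ hroot)
  · refine lie_mem_of_mem_iSup_right _ _ (fun i y hy => ?_) hy
    refine lie_mem_of_mem_iSup_right _ _ (fun hi y hy => ?_) hy
    refine lie_mem_of_mem_biSup_of_add_mem _ hbr hzero (fun α hα γ hγ hroot => ?_) hx hy
    obtain ⟨s, hs, hαs⟩ := Set.mem_iUnion₂.mp (hcover ▸ hα)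
    have hmin : min s i ∈ Set.Iic r := (min_le_right s i).trans hi
    exact (le_biSup g (hlayer s hs i (lt_of_le_of_lt hi hr) α hαs γ hγ hroot)).trans
      (le_biSup (fun j => ⨆ μ ∈ Layer j ∪ {β j}, g μ) hmin)

/-- If `α ∈ Δ⁺_r ∪ {β_r}` and `γ ∈ Δ⁺_s ∪ {β_s}` with `t = min(r,s)` and `α + γ` is a
root, then `α + γ ∈ Δ⁺_t ∪ {β_t}`.  Hence the subspaces
`m_r = g_{β_r} + Σ_{α ∈ Δ⁺_r} g_α` satisfy `[m_r, m_s] ⊆ m_{min(r,s)}` and each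
`n_r = m_1 + ⋯ + m_r` is an ideal in the nilpotent algebra `n = Σ_{α ∈ Δ⁺} g_α`. -/
theorem stmt10 {V L : Type*} [NormedAddCommGroup V] [InnerProductSpace ℝ V]
    [LieRing L] [LieAlgebra ℝ L]
    (Δ pos : Set V) (m : ℕ) (β : ℕ → V) (Layer : ℕ → Set V)
    (g : V → Submodule ℝ L)
    (hfin : Δ.Finite) (h0 : (0 : V) ∉ Δ) (hposΔ : pos ⊆ Δ)
    (hnn : ∀ α ∈ pos, -α ∉ pos)
    -- sum of two positive roots, when a root, is positive
    (hsum : ∀ α ∈ pos, ∀ γ ∈ pos, α + γ ∈ Δ → α + γ ∈ pos)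
    -- layer characterization: α ∈ Δ⁺_r ∪ {β_r} iff α ⊥ β_i (i<r) and ⟨α, β_r⟩ > 0
    (hchar : ∀ r < m, Layer r ∪ {β r} =
      {α ∈ pos | (∀ i < r, ⟪α, β i⟫ = 0) ∧ 0 < ⟪α, β r⟫})
    -- the layers together with the cascade roots exhaust Δ⁺
    (hcover : pos = ⋃ r ∈ Set.Iio m, (Layer r ∪ {β r}))
    -- root space bracket rule and vanishing of non-root spaces
    (hbr : ∀ α γ : V, ∀ x ∈ g α, ∀ y ∈ g γ, ⁅x, y⁆ ∈ g (α + γ))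
    (hzero : ∀ μ : V, μ ∉ Δ → g μ = ⊥) :
    -- the root-theoretic statement
    (∀ r < m, ∀ s < m, ∀ α ∈ Layer r ∪ {β r}, ∀ γ ∈ Layer s ∪ {β s},
      α + γ ∈ Δ → α + γ ∈ Layer (min r s) ∪ {β (min r s)}) ∧
    -- [m_r, m_s] ⊆ m_{min(r,s)}
    (∀ r < m, ∀ s < m,
      ∀ x ∈ (⨆ α ∈ Layer r ∪ {β r}, g α),
      ∀ y ∈ (⨆ α ∈ Layer s ∪ {β s}, g α),
        ⁅x, y⁆ ∈ (⨆ α ∈ Layer (min r s) ∪ {β (min r s)}, g α)) ∧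
    -- each n_r is an ideal in n
    (∀ r < m,
      ∀ x ∈ (⨆ α ∈ pos, g α),
      ∀ y ∈ (⨆ i ∈ Set.Iic r, ⨆ α ∈ Layer i ∪ {β i}, g α),
        ⁅x, y⁆ ∈ (⨆ i ∈ Set.Iic r, ⨆ α ∈ Layer i ∪ {β i}, g α)) :=
  stmt10_general Δ pos m β Layer g hsum hchar hcover hbr hzero
end

section
/- In the root system of type C_n, the Kostant cascade is β_r = 2(ψ_r + ... + ψ_{n-1}) + ψ_n for 1 ≤ r ≤ n, and for each r, if α, α' ∈ Δ+ satisfy α + α' = β_r with both α and α' orthogonal to β_i for all i < r, then exactly one of α, α' contains ψ_n with coefficient 1 and, after possibly swapping, α = ψ_r + ... + ψ_u and α' = ψ_r + ... + ψ_u + 2(ψ_{u+1} + ... + ψ_{n-1}) + ψ_n for some u with r ≤ u ≤ n-1. -/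
/-- Standard basis vector `e_i` (indices are `1`-based). -/
def Ev (i : ℕ) : ℕ → ℝ := fun k => if k = i then 1 else 0

/-- The Euclidean inner product on the coordinates `0, …, n`. -/
def ip (n : ℕ) (x y : ℕ → ℝ) : ℝ := ∑ k ∈ Finset.range (n + 1), x k * y k

/-- Simple roots of type `C_n`: `ψ_i = e_i - e_{i+1}` for `i < n` and `ψ_n = 2e_n`. -/
noncomputable def ψC (n i : ℕ) : ℕ → ℝ :=
  if i = n then (2 : ℝ) • Ev n else Ev i - Ev (i + 1)

/-- Positive roots of type `C_n`: `e_i ± e_j` (`i < j`) and `2e_i`. -/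
def posC (n : ℕ) : Set (ℕ → ℝ) :=
  {v | (∃ i j : ℕ, 1 ≤ i ∧ i < j ∧ j ≤ n ∧ (v = Ev i - Ev j ∨ v = Ev i + Ev j)) ∨
       (∃ i : ℕ, 1 ≤ i ∧ i ≤ n ∧ v = (2 : ℝ) • Ev i)}

/-- The Kostant cascade of type `C_n`: `β_r = 2ψ_r + ⋯ + 2ψ_{n-1} + ψ_n`. -/
noncomputable def βC (n r : ℕ) : ℕ → ℝ :=
  (∑ i ∈ Finset.Icc r (n - 1), (2 : ℝ) • ψC n i) + ψC n n

lemma sum_Ev (m a : ℕ) : ∑ k ∈ Finset.range (m+1), Ev a k = if a ≤ m then 1 else 0 := by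
  unfold Ev
  rw [Finset.sum_ite_eq' (Finset.range (m+1)) a (fun _ => (1:ℝ))]
  simp [Nat.lt_succ_iff]

lemma tele (a b : ℕ) (h : a ≤ b) :
    ∑ i ∈ Finset.Icc a b, (Ev i - Ev (i+1)) = Ev a - Ev (b+1) := by
  induction b with
  | zero =>
    have ha : a = 0 := Nat.le_zero.mp h
    subst ha; simp
  | succ b ih =>
    by_cases hab : a ≤ b
    · rw [Finset.sum_Icc_succ_top (by omega), ih hab]; abel
    · have : a = b + 1 := by omega
      subst this; simp

lemma βC_eq (n r : ℕ) (hn : 1 ≤ n) (hr2 : r ≤ n) : βC n r = (2:ℝ) • Ev r := by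
  unfold βC
  by_cases h : r < n
  · have h1 : ∀ i ∈ Finset.Icc r (n-1), (2:ℝ) • ψC n i = (2:ℝ) • (Ev i - Ev (i+1)) := by
      intro i hi
      simp only [Finset.mem_Icc] at hi
      rw [ψC, if_neg (by omega)]
    rw [Finset.sum_congr rfl h1, ← Finset.smul_sum, tele r (n-1) (by omega),
      show n - 1 + 1 = n by omega, ψC, if_pos rfl]
    module
  · have : r = n := by omega
    subst this
    rw [Finset.Icc_eq_empty (by omega), Finset.sum_empty, zero_add, ψC, if_pos rfl]

lemma ip_sm (n : ℕ) (x : ℕ → ℝ) (s : ℕ) (hs : s ≤ n) : ip n x ((2:ℝ) • Ev s) = 2 * x s := by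
  unfold ip
  have h1 : ∀ k ∈ Finset.range (n+1), x k * ((2:ℝ) • Ev s) k = if k = s then 2 * x k else 0 := by
    intro k _
    simp only [Pi.smul_apply, smul_eq_mul, Ev]
    split_ifs <;> ring
  rw [Finset.sum_congr rfl h1, Finset.sum_ite_eq' (Finset.range (n+1)) s (fun k => 2 * x k),
    if_pos (Finset.mem_range.mpr (by omega))]

lemma psum_mid (n m : ℕ) (c : ℕ → ℕ) (hm1 : 1 ≤ m) (hmn : m < n) :
    ∑ k ∈ Finset.range (m+1), (∑ i ∈ Finset.Icc 1 n, (c i : ℝ) • ψC n i) k = c m := by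
  simp only [Finset.sum_apply, Pi.smul_apply, smul_eq_mul]
  rw [Finset.sum_comm]
  have h1 : ∀ i ∈ Finset.Icc 1 n, ∑ k ∈ Finset.range (m+1), (c i : ℝ) * ψC n i k
      = if i = m then (c i : ℝ) else 0 := by
    intro i hi
    simp only [Finset.mem_Icc] at hi
    rw [← Finset.mul_sum]
    by_cases h : i = n
    · rw [ψC, if_pos h, if_neg (by omega : ¬ i = m)]
      simp only [Pi.smul_apply, smul_eq_mul]
      rw [← Finset.mul_sum, sum_Ev, if_neg (by omega : ¬ n ≤ m)]
      ring
    · rw [ψC, if_neg h]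
      simp only [Pi.sub_apply]
      rw [Finset.sum_sub_distrib, sum_Ev, sum_Ev]
      split_ifs <;> first | (exfalso; omega) | ring
  rw [Finset.sum_congr rfl h1, Finset.sum_ite_eq' (Finset.Icc 1 n) m (fun i => (c i : ℝ)),
    if_pos (Finset.mem_Icc.mpr ⟨hm1, by omega⟩)]

lemma psum_top (n : ℕ) (c : ℕ → ℕ) (hn : 1 ≤ n) :
    ∑ k ∈ Finset.range (n+1), (∑ i ∈ Finset.Icc 1 n, (c i : ℝ) • ψC n i) k = 2 * c n := by
  simp only [Finset.sum_apply, Pi.smul_apply, smul_eq_mul]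
  rw [Finset.sum_comm]
  have h1 : ∀ i ∈ Finset.Icc 1 n, ∑ k ∈ Finset.range (n+1), (c i : ℝ) * ψC n i k
      = if i = n then 2 * (c i : ℝ) else 0 := by
    intro i hi
    simp only [Finset.mem_Icc] at hi
    rw [← Finset.mul_sum]
    by_cases h : i = n
    · rw [ψC, if_pos h, if_pos h]
      simp only [Pi.smul_apply, smul_eq_mul]
      rw [← Finset.mul_sum, sum_Ev, if_pos (le_refl n)]
      ring
    · rw [ψC, if_neg h, if_neg h]
      simp only [Pi.sub_apply]
      rw [Finset.sum_sub_distrib, sum_Ev, sum_Ev, if_pos (by omega : i ≤ n),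
        if_pos (by omega : i + 1 ≤ n)]
      ring
  rw [Finset.sum_congr rfl h1, Finset.sum_ite_eq' (Finset.Icc 1 n) n (fun i => 2 * (c i : ℝ)),
    if_pos (Finset.mem_Icc.mpr ⟨hn, le_refl n⟩)]

lemma keyC (n r i j : ℕ) (hn : 1 ≤ n) (hr1 : 1 ≤ r) (hr2 : r ≤ n)
    (hi1 : 1 ≤ i) (hij : i < j) (hjn : j ≤ n)
    (α' : ℕ → ℝ) (hα' : α' ∈ posC n)
    (ho : ∀ s : ℕ, 1 ≤ s → s < r → (Ev i - Ev j) s = 0 ∧ α' s = 0)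
    (hsum : (Ev i - Ev j) + α' = (2:ℝ) • Ev r) :
    ∃ u : ℕ, r ≤ u ∧ u ≤ n - 1 ∧
      Ev i - Ev j = ∑ t ∈ Finset.Icc r u, ψC n t ∧
      α' = (∑ t ∈ Finset.Icc r u, ψC n t) +
        (∑ t ∈ Finset.Icc (u + 1) (n - 1), (2:ℝ) • ψC n t) + ψC n n := by
  have hir : r ≤ i := by
    by_contra h
    have h0 := (ho i hi1 (by omega)).1
    simp only [Pi.sub_apply, Ev, if_pos rfl, if_neg (show ¬ i = j by omega)] at h0
    norm_num at h0
  rcases hα' with ⟨i', j', hi1', hij', hjn', hv | hv⟩ | ⟨i', hi1', hin', hv⟩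
  · -- α' = Ev i' - Ev j' : impossible (coordinate sums 0 + 0 ≠ 2)
    exfalso
    subst hv
    have hL : ∑ k ∈ Finset.range (n+1), ((Ev i - Ev j) + (Ev i' - Ev j')) k = 0 := by
      simp only [Pi.add_apply, Pi.sub_apply]
      rw [Finset.sum_add_distrib, Finset.sum_sub_distrib, Finset.sum_sub_distrib,
        sum_Ev, sum_Ev, sum_Ev, sum_Ev, if_pos (show i ≤ n by omega), if_pos hjn,
        if_pos (show i' ≤ n by omega), if_pos hjn']
      ring
    rw [hsum] at hL
    simp only [Pi.smul_apply, smul_eq_mul] at hL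
    rw [← Finset.mul_sum, sum_Ev, if_pos hr2] at hL
    norm_num at hL
  · -- α' = Ev i' + Ev j'
    subst hv
    have hir' : r ≤ i' := by
      by_contra h
      have h0 := (ho i' hi1' (by omega)).2
      simp only [Pi.add_apply, Ev, if_pos rfl, if_neg (show ¬ i' = j' by omega)] at h0
      norm_num at h0
    have h1 := congrFun hsum r
    simp only [Pi.add_apply, Pi.sub_apply, Pi.smul_apply, smul_eq_mul, Ev, if_pos rfl] at h1
    rw [if_neg (show ¬ r = j by omega), if_neg (show ¬ r = j' by omega)] at h1
    split_ifs at h1 with h2 h3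
    · -- r = i, r = i'
      have h4 := congrFun hsum j
      simp only [Pi.add_apply, Pi.sub_apply, Pi.smul_apply, smul_eq_mul, Ev, if_pos rfl] at h4
      rw [if_neg (show ¬ j = r by omega), if_neg (show ¬ j = i by omega),
        if_neg (show ¬ j = i' by omega)] at h4
      by_cases h5 : j = j'
      · subst h5
        rw [if_pos rfl] at h4
        refine ⟨j - 1, by omega, by omega, ?_, ?_⟩
        · have e1 : ∀ t ∈ Finset.Icc r (j-1), ψC n t = Ev t - Ev (t+1) := by
            intro t ht
            simp only [Finset.mem_Icc] at ht
            rw [ψC, if_neg (by omega)]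
          rw [Finset.sum_congr rfl e1, tele r (j-1) (by omega), show j - 1 + 1 = j by omega,
            ← h2]
        · have e1 : ∀ t ∈ Finset.Icc r (j-1), ψC n t = Ev t - Ev (t+1) := by
            intro t ht
            simp only [Finset.mem_Icc] at ht
            rw [ψC, if_neg (by omega)]
          rw [Finset.sum_congr rfl e1, tele r (j-1) (by omega), show j - 1 + 1 = j by omega,
            ψC, if_pos rfl, ← h3]
          by_cases h6 : j ≤ n - 1
          · have e2 : ∀ t ∈ Finset.Icc j (n-1), (2:ℝ) • ψC n t = (2:ℝ) • (Ev t - Ev (t+1)) := by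
              intro t ht
              simp only [Finset.mem_Icc] at ht
              rw [ψC, if_neg (by omega)]
            rw [Finset.sum_congr rfl e2, ← Finset.smul_sum,
              tele j (n-1) h6, show n - 1 + 1 = n by omega]
            module
          · have hj : j = n := by omega
            subst hj
            rw [Finset.Icc_eq_empty (by omega), Finset.sum_empty]
            module
      · rw [if_neg h5] at h4
        norm_num at h4
    · norm_num at h1
    · norm_num at h1
    · norm_num at h1
  · -- α' = 2 • Ev i' : impossible
    exfalso
    subst hv
    have h4 := congrFun hsum j
    simp only [Pi.add_apply, Pi.sub_apply, Pi.smul_apply, smul_eq_mul, Ev, if_pos rfl] at h4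
    rw [if_neg (show ¬ j = i by omega)] at h4
    split_ifs at h4 <;> norm_num at h4

/-- In type `C_n` the Kostant cascade is `β_r = 2(ψ_r + ⋯ + ψ_{n-1}) + ψ_n` for
`1 ≤ r ≤ n`, and if positive roots `α, α'` orthogonal to `β_i` for `i < r` satisfy
`α + α' = β_r`, then, after possibly swapping, `α = ψ_r + ⋯ + ψ_u` and
`α' = ψ_r + ⋯ + ψ_u + 2(ψ_{u+1} + ⋯ + ψ_{n-1}) + ψ_n` for some `r ≤ u ≤ n - 1`
(so exactly one of them contains `ψ_n`, with coefficient `1`). -/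
theorem stmt14 (n r : ℕ) (hn : 1 ≤ n) (hr1 : 1 ≤ r) (hr2 : r ≤ n) :
    βC n r ∈ posC n ∧
    (∀ s : ℕ, 1 ≤ s → s < r → ip n (βC n r) (βC n s) = 0) ∧
    -- maximality among positive roots orthogonal to β_1, …, β_{r-1}
    (∀ α ∈ posC n, (∀ s : ℕ, 1 ≤ s → s < r → ip n α (βC n s) = 0) →
      (∃ c : ℕ → ℕ, α = βC n r + ∑ i ∈ Finset.Icc 1 n, (c i : ℝ) • ψC n i) →
        α = βC n r) ∧
    -- decompositions of β_r as a sum of two positive roots orthogonal to earlier β's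
    (∀ α ∈ posC n, ∀ α' ∈ posC n,
      (∀ s : ℕ, 1 ≤ s → s < r → ip n α (βC n s) = 0 ∧ ip n α' (βC n s) = 0) →
      α + α' = βC n r →
      ∃ u : ℕ, r ≤ u ∧ u ≤ n - 1 ∧
        ((α = ∑ i ∈ Finset.Icc r u, ψC n i ∧
            α' = (∑ i ∈ Finset.Icc r u, ψC n i) +
              (∑ i ∈ Finset.Icc (u + 1) (n - 1), (2 : ℝ) • ψC n i) + ψC n n) ∨
         (α' = ∑ i ∈ Finset.Icc r u, ψC n i ∧
            α = (∑ i ∈ Finset.Icc r u, ψC n i) +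
              (∑ i ∈ Finset.Icc (u + 1) (n - 1), (2 : ℝ) • ψC n i) + ψC n n))) := by
  refine ⟨?_, ?_, ?_, ?_⟩
  · rw [βC_eq n r hn hr2]
    exact Or.inr ⟨r, hr1, hr2, rfl⟩
  · intro s h1 h2
    rw [βC_eq n r hn hr2, βC_eq n s hn (by omega), ip_sm n _ s (by omega)]
    simp only [Pi.smul_apply, smul_eq_mul, Ev, if_neg (show ¬ s = r by omega)]
    ring
  · -- maximality
    intro α hα horth hex
    obtain ⟨c, hc⟩ := hex
    rw [βC_eq n r hn hr2] at hc ⊢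
    have horth' : ∀ s, 1 ≤ s → s < r → α s = 0 := by
      intro s h1 h2
      have h3 := horth s h1 h2
      rw [βC_eq n s hn (by omega), ip_sm n α s (by omega)] at h3
      linarith
    have hPc : ∀ m, 1 ≤ m → m ≤ n - 1 →
        ∑ k ∈ Finset.range (m+1), α k = (if r ≤ m then 2 else 0) + c m := by
      intro m h1 h2
      rw [hc]
      simp only [Pi.add_apply]
      rw [Finset.sum_add_distrib, psum_mid n m c h1 (by omega)]
      congr 1
      simp only [Pi.smul_apply, smul_eq_mul]
      rw [← Finset.mul_sum, sum_Ev]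
      split_ifs <;> norm_num
    have hPn : ∑ k ∈ Finset.range (n+1), α k = 2 + 2 * c n := by
      rw [hc]
      simp only [Pi.add_apply]
      rw [Finset.sum_add_distrib, psum_top n c hn]
      congr 1
      simp only [Pi.smul_apply, smul_eq_mul]
      rw [← Finset.mul_sum, sum_Ev, if_pos hr2]
      norm_num
    rcases hα with ⟨i, j, hi1, hij, hjn, hv | hv⟩ | ⟨i, hi1, hin, hv⟩
    · exfalso
      rw [hv] at hPn
      simp only [Pi.sub_apply] at hPn
      rw [Finset.sum_sub_distrib, sum_Ev, sum_Ev, if_pos (show i ≤ n by omega),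
        if_pos hjn] at hPn
      have hcn : (0:ℝ) ≤ (c n : ℝ) := Nat.cast_nonneg _
      linarith
    · exfalso
      have hri : r ≤ i := by
        by_contra h
        have h0 := horth' i hi1 (by omega)
        rw [hv] at h0
        simp only [Pi.add_apply, Ev, if_pos rfl, if_neg (show ¬ i = j by omega)] at h0
        norm_num at h0
      have hP := hPc (j-1) (by omega) (by omega)
      rw [hv] at hP
      simp only [Pi.add_apply] at hP
      rw [Finset.sum_add_distrib, sum_Ev, sum_Ev, if_pos (show i ≤ j - 1 by omega),
        if_neg (show ¬ j ≤ j - 1 by omega), if_pos (show r ≤ j - 1 by omega)] at hP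
      have hcj : (0:ℝ) ≤ (c (j-1) : ℝ) := Nat.cast_nonneg _
      linarith
    · have hri : r ≤ i := by
        by_contra h
        have h0 := horth' i hi1 (by omega)
        rw [hv] at h0
        simp only [Pi.smul_apply, smul_eq_mul, Ev, if_pos rfl] at h0
        norm_num at h0
      rcases eq_or_lt_of_le hri with heq | hlt
      · rw [hv, ← heq]
      · exfalso
        have hP := hPc (i-1) (by omega) (by omega)
        rw [hv] at hP
        simp only [Pi.smul_apply, smul_eq_mul] at hP
        rw [← Finset.mul_sum, sum_Ev, if_neg (show ¬ i ≤ i - 1 by omega),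
          if_pos (show r ≤ i - 1 by omega)] at hP
        have hci : (0:ℝ) ≤ (c (i-1) : ℝ) := Nat.cast_nonneg _
        linarith
  · -- decompositions
    intro α hα α' hα' horth hsum
    rw [βC_eq n r hn hr2] at hsum
    have ho : ∀ s, 1 ≤ s → s < r → α s = 0 ∧ α' s = 0 := by
      intro s h1 h2
      obtain ⟨ha, hb⟩ := horth s h1 h2
      rw [βC_eq n s hn (by omega), ip_sm n _ s (by omega)] at ha hb
      exact ⟨by linarith, by linarith⟩
    have hS : (∑ k ∈ Finset.range (n+1), α k) + (∑ k ∈ Finset.range (n+1), α' k) = 2 := by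
      rw [← Finset.sum_add_distrib]
      have he : ∀ k ∈ Finset.range (n+1), α k + α' k = 2 * Ev r k := by
        intro k _
        have := congrFun hsum k
        simpa using this
      rw [Finset.sum_congr rfl he, ← Finset.mul_sum, sum_Ev, if_pos hr2]
      norm_num
    have hspos : ∀ v ∈ posC n, (∀ i j : ℕ, 1 ≤ i → i < j → j ≤ n → v ≠ Ev i - Ev j) →
        ∑ k ∈ Finset.range (n+1), v k = 2 := by
      intro v hv hne
      rcases hv with ⟨i, j, hi1, hij, hjn, hw | hw⟩ | ⟨i, hi1, hin, hw⟩
      · exact absurd hw (hne i j hi1 hij hjn)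
      · rw [hw]
        simp only [Pi.add_apply]
        rw [Finset.sum_add_distrib, sum_Ev, sum_Ev, if_pos (show i ≤ n by omega), if_pos hjn]
        norm_num
      · rw [hw]
        simp only [Pi.smul_apply, smul_eq_mul]
        rw [← Finset.mul_sum, sum_Ev, if_pos hin]
        norm_num
    by_cases hc1 : ∃ i j : ℕ, 1 ≤ i ∧ i < j ∧ j ≤ n ∧ α = Ev i - Ev j
    · obtain ⟨i, j, hi1, hij, hjn, hv⟩ := hc1
      subst hv
      obtain ⟨u, h1, h2, h3, h4⟩ := keyC n r i j hn hr1 hr2 hi1 hij hjn α' hα' ho hsum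
      exact ⟨u, h1, h2, Or.inl ⟨h3, h4⟩⟩
    · have hSα : ∑ k ∈ Finset.range (n+1), α k = 2 := by
        apply hspos α hα
        intro i j h1 h2 h3 h4
        exact hc1 ⟨i, j, h1, h2, h3, h4⟩
      have hSα' : ∑ k ∈ Finset.range (n+1), α' k = 0 := by linarith
      have hc2 : ∃ i j : ℕ, 1 ≤ i ∧ i < j ∧ j ≤ n ∧ α' = Ev i - Ev j := by
        by_contra h
        have := hspos α' hα' (fun i j h1 h2 h3 h4 => h ⟨i, j, h1, h2, h3, h4⟩)
        linarith
      obtain ⟨i, j, hi1, hij, hjn, hv⟩ := hc2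
      subst hv
      rw [add_comm] at hsum
      obtain ⟨u, h1, h2, h3, h4⟩ := keyC n r i j hn hr1 hr2 hi1 hij hjn α hα
        (fun s hs1 hs2 => ⟨(ho s hs1 hs2).2, (ho s hs1 hs2).1⟩) hsum
      exact ⟨u, h1, h2, Or.inr ⟨h3, h4⟩⟩
end
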